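/- arXiv:1903.07346 — 6 statements merged into one kernel-verified Lean document; each statement's English description precedes it below -/
import Mathlib

section
/- For every n ≥ 1 and k ≥ 1, the generating function identity holds: ∑_{k ≥ 0} θ_{n,k}(t) z^k = ∏_{m=1}^{n} (1 + a_m z / (1 - a_m z t)), as an identity of formal power series in z (with coefficients polynomials in t), where θ_{n,k}(t) = ∑_{n ≥ ℓ_1 ≥ ... ≥ ℓ_k ≥ 1} a_{ℓ_1}···a_{ℓ_k} t^{σ(ℓ)}. -/
/-- The set of weakly decreasing `k`-tuples with entries in `{1,...,n}`. -/
def multisetTuples (n k : ℕ) : Finset (Fin k → ℕ) :=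
  (Fintype.piFinset fun _ : Fin k => Finset.Icc 1 n).filter
    fun ℓ => ∀ i j : Fin k, i ≤ j → ℓ j ≤ ℓ i

/-- The number of adjacent equalities `ℓ_j = ℓ_{j+1}` in a tuple. -/
def sigmaEq {k : ℕ} (ℓ : Fin k → ℕ) : ℕ :=
  (Finset.univ.filter fun p : Fin k × Fin k =>
    (p.2 : ℕ) = (p.1 : ℕ) + 1 ∧ ℓ p.1 = ℓ p.2).card

open PowerSeries Polynomial in
/-- θ_{n,k}(t) as a polynomial in the interpolation variable t. -/
noncomputable def thetaPoly (a : ℕ → ℝ) (n k : ℕ) : Polynomial ℝ :=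
  ∑ ℓ ∈ multisetTuples n k, Polynomial.C (∏ i, a (ℓ i)) * Polynomial.X ^ sigmaEq ℓ

/-!
Taking the coefficient of `z^k` in the product, a term is indexed by multiplicities `c_m`
(`1 ≤ m ≤ n`) with `∑ c_m = k`, and the factor `1 + a z / (1 - a t z)` contributes `a^c t^(c-1)`
for `c ≥ 1` and `1` for `c = 0`. A weakly decreasing tuple is determined by its multiplicities,
and its adjacent equalities number `k - #{distinct values} = ∑_{c_m ≥ 1} (c_m - 1)`, so its weight
`a_{ℓ_1} ⋯ a_{ℓ_k} t^{σ(ℓ)}` is exactly that product of coefficients.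
-/

open Finset

def factorCoeff {M : Type*} [Monoid M] (b t : M) (j : ℕ) : M :=
  if j = 0 then 1 else b ^ j * t ^ (j - 1)

namespace PowerSeries

variable {R : Type*} [CommRing R]

theorem invOfUnit_one_sub_C_mul_X (b : R) :
    invOfUnit (1 - C b * X) 1 = mk (b ^ ·) := by
  have h : (1 - C b * X) * mk (b ^ ·) = 1 := by
    simpa [rescale_mk, rescale_X, mul_comm] using
      congrArg (rescale b) (mk_one_mul_one_sub_eq_one R)
  calc invOfUnit (1 - C b * X) 1
      = invOfUnit (1 - C b * X) 1 * ((1 - C b * X) * mk (b ^ ·)) := by rw [h, mul_one]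
    _ = mk (b ^ ·) := by rw [← mul_assoc, invOfUnit_mul _ _ (by simp), one_mul]

theorem coeff_one_add_C_mul_X_mul_invOfUnit (b t : R) (j : ℕ) :
    coeff j (1 + C b * X * invOfUnit (1 - C (b * t) * X) 1) = factorCoeff b t j := by
  rw [invOfUnit_one_sub_C_mul_X, factorCoeff]
  cases j with
  | zero => simp
  | succ j =>
    rw [map_add, mul_assoc, coeff_C_mul, coeff_succ_X_mul, coeff_mk, coeff_one]
    simp only [Nat.add_eq_zero_iff, one_ne_zero, and_false, ↓reduceIte, zero_add,
      add_tsub_cancel_right]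
    ring

end PowerSeries

section Repeats

variable {α : Type*} {k : ℕ}

def IsRepeat (ℓ : Fin k → α) (j : Fin k) : Prop :=
  ∃ i : Fin k, (i : ℕ) + 1 = j ∧ ℓ i = ℓ j

theorem sigmaEq_eq_card_isRepeat (ℓ : Fin k → ℕ) [DecidablePred (IsRepeat ℓ)] :
    sigmaEq ℓ = #{j | IsRepeat ℓ j} := by
  refine card_bij (fun p _ => p.2) ?_ ?_ ?_
  · rintro ⟨i, j⟩ hij
    simp only [mem_filter, mem_univ, true_and] at hij ⊢
    exact ⟨i, hij.1.symm, hij.2⟩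
  · rintro ⟨i, j⟩ hij ⟨i', j'⟩ hij' (rfl : j = j')
    simp only [mem_filter, mem_univ, true_and] at hij hij'
    simp only [Prod.mk.injEq, and_true]
    omega
  · intro j hj
    obtain ⟨i, hij, hℓ⟩ := (mem_filter.mp hj).2
    exact ⟨(i, j), by simp [hij, hℓ], rfl⟩

theorem IsRepeat.of_lt [PartialOrder α] {ℓ : Fin k → α} (hℓ : Antitone ℓ) {i j : Fin k}
    (hij : i < j) (heq : ℓ i = ℓ j) : IsRepeat ℓ j := by
  let p : Fin k := ⟨j - 1, by omega⟩
  have hip : i ≤ p := Fin.mk_le_mk.mpr (by omega)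
  have hpj : p ≤ j := Fin.mk_le_mk.mpr (by omega)
  exact ⟨p, by simp [p]; omega, le_antisymm (heq ▸ hℓ hip) (hℓ hpj)⟩

theorem card_not_isRepeat [PartialOrder α] [DecidableEq α] {ℓ : Fin k → α} (hℓ : Antitone ℓ)
    [DecidablePred (IsRepeat ℓ)] : #{j | ¬IsRepeat ℓ j} = #(univ.image ℓ) := by
  refine card_bij (fun j _ => ℓ j) (fun j _ => mem_image_of_mem ℓ (mem_univ j)) ?_ ?_
  · intro i hi j hj hij
    simp only [mem_filter, mem_univ, true_and] at hi hj
    by_contra hne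
    rcases lt_or_gt_of_ne hne with hlt | hlt
    · exact hj (IsRepeat.of_lt hℓ hlt hij)
    · exact hi (IsRepeat.of_lt hℓ hlt hij.symm)
  · intro v hv
    obtain ⟨i, -, rfl⟩ := mem_image.mp hv
    have hne : ({j | ℓ j = ℓ i} : Finset (Fin k)).Nonempty := ⟨i, by simp⟩
    obtain ⟨-, hjmin⟩ := mem_filter.mp (min'_mem _ hne)
    refine ⟨_, mem_filter.mpr ⟨mem_univ _, ?_⟩, hjmin⟩
    -- the first occurrence of a value is not a repeat
    rintro ⟨p, hp, heq⟩
    have hmin := min'_le _ p (show p ∈ ({j | ℓ j = ℓ i} : Finset (Fin k)) by simp [heq, hjmin])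
    rw [Fin.le_def] at hmin
    omega

theorem sigmaEq_add_card_image {ℓ : Fin k → ℕ} (hℓ : Antitone ℓ) :
    sigmaEq ℓ + #(univ.image ℓ) = k := by
  classical
  rw [sigmaEq_eq_card_isRepeat, ← card_not_isRepeat hℓ, card_filter_add_card_filter_not,
    card_univ, Fintype.card_fin]

end Repeats

section TupleCount

variable {k : ℕ}

noncomputable def tupleCount (ℓ : Fin k → ℕ) : ℕ →₀ ℕ :=
  Multiset.toFinsupp (univ.val.map ℓ)

theorem tupleCount_apply (ℓ : Fin k → ℕ) (m : ℕ) : tupleCount ℓ m = #{i | ℓ i = m} := by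
  rw [tupleCount, Multiset.toFinsupp_apply, Multiset.count_map, card_def, filter_val]
  simp only [eq_comm]

theorem support_tupleCount (ℓ : Fin k → ℕ) : (tupleCount ℓ).support = univ.image ℓ := by
  rw [tupleCount, Multiset.toFinsupp_support]
  rfl

theorem sum_tupleCount (ℓ : Fin k → ℕ) : ∑ m ∈ univ.image ℓ, tupleCount ℓ m = k := by
  simp_rw [tupleCount_apply, ← card_eq_sum_card_image, card_univ, Fintype.card_fin]

theorem map_univ_val_eq_ofFn (ℓ : Fin k → ℕ) : univ.val.map ℓ = ↑(List.ofFn ℓ) := by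
  rw [List.ofFn_eq_map, Fin.univ_def]
  rfl

theorem mem_multisetTuples {n : ℕ} {ℓ : Fin k → ℕ} :
    ℓ ∈ multisetTuples n k ↔ (∀ i, ℓ i ∈ Icc 1 n) ∧ Antitone ℓ := by
  rw [multisetTuples, mem_filter, Fintype.mem_piFinset]
  rfl

theorem tupleCount_mem_finsuppAntidiag {s : Finset ℕ} {ℓ : Fin k → ℕ} (hℓ : ∀ i, ℓ i ∈ s) :
    tupleCount ℓ ∈ s.finsuppAntidiag k := by
  have hsupp : (tupleCount ℓ).support ⊆ s := by
    rw [support_tupleCount, image_subset_iff]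
    exact fun i _ => hℓ i
  refine mem_finsuppAntidiag.mpr ⟨?_, hsupp⟩
  rw [← sum_subset hsupp fun m _ hm => Finsupp.notMem_support_iff.mp hm, support_tupleCount,
    sum_tupleCount]

theorem tupleCount_injOn : Set.InjOn (tupleCount (k := k)) {ℓ | Antitone ℓ} := by
  intro ℓ₁ h₁ ℓ₂ h₂ h
  have hperm : (List.ofFn ℓ₁).Perm (List.ofFn ℓ₂) := by
    rw [← Multiset.coe_eq_coe, ← map_univ_val_eq_ofFn, ← map_univ_val_eq_ofFn]
    exact Multiset.toFinsupp.injective h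
  exact List.ofFn_injective <| hperm.eq_of_pairwise' (r := (· ≥ ·))
    (List.pairwise_ofFn.mpr fun i j hij => h₁ hij.le)
    (List.pairwise_ofFn.mpr fun i j hij => h₂ hij.le)

theorem exists_tupleCount_eq {n : ℕ} {c : ℕ →₀ ℕ} (hc : c ∈ (Icc 1 n).finsuppAntidiag k) :
    ∃ ℓ ∈ multisetTuples n k, tupleCount ℓ = c := by
  obtain ⟨hsum, hsupp⟩ := mem_finsuppAntidiag.mp hc
  set L := (Finsupp.toMultiset c).sort (· ≥ ·)
  have hlen : L.length = k := by
    rw [Multiset.length_sort, Finsupp.card_toMultiset, ← hsum, Finsupp.sum]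
    exact sum_subset hsupp fun m _ hm => Finsupp.notMem_support_iff.mp hm
  subst hlen
  refine ⟨fun i => L[(i : ℕ)], mem_multisetTuples.mpr ⟨fun i => hsupp ?_, fun i j hij => ?_⟩, ?_⟩
  · rw [← Finsupp.mem_toMultiset, ← Multiset.mem_sort (r := (· ≥ ·))]
    exact List.getElem_mem _
  · rcases hij.eq_or_lt with rfl | hlt
    · rfl
    · exact (Multiset.pairwise_sort _ (· ≥ ·)).rel_get_of_lt hlt
  · rw [tupleCount, map_univ_val_eq_ofFn, List.ofFn_getElem, Multiset.sort_eq,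
      Finsupp.toMultiset_toFinsupp]

theorem prod_mul_pow_sigmaEq {M : Type*} [CommMonoid M] (b : ℕ → M) (t : M) {ℓ : Fin k → ℕ}
    (hℓ : Antitone ℓ) {s : Finset ℕ} (hs : univ.image ℓ ⊆ s) :
    (∏ i, b (ℓ i)) * t ^ sigmaEq ℓ = ∏ m ∈ s, factorCoeff (b m) t (tupleCount ℓ m) := by
  have hpos : ∀ m ∈ univ.image ℓ, tupleCount ℓ m ≠ 0 := fun m hm =>
    Finsupp.mem_support_iff.mp (support_tupleCount ℓ ▸ hm)
  have hsigma : sigmaEq ℓ = ∑ m ∈ univ.image ℓ, (tupleCount ℓ m - 1) := by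
    have hsum : ∑ m ∈ univ.image ℓ, (tupleCount ℓ m - 1) + #(univ.image ℓ) =
        ∑ m ∈ univ.image ℓ, tupleCount ℓ m := by
      rw [card_eq_sum_ones, ← sum_add_distrib]
      exact sum_congr rfl fun m hm => Nat.sub_add_cancel (Nat.one_le_iff_ne_zero.mpr (hpos m hm))
    have := sigmaEq_add_card_image hℓ
    have := sum_tupleCount ℓ
    omega
  rw [← prod_subset hs fun m _ hm => ?_]
  · rw [prod_comp b ℓ, hsigma, ← prod_pow_eq_pow_sum, ← prod_mul_distrib]
    refine prod_congr rfl fun m hm => ?_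
    rw [factorCoeff, if_neg (hpos m hm), tupleCount_apply]
  · rw [← support_tupleCount, Finsupp.notMem_support_iff] at hm
    rw [hm, factorCoeff, if_pos rfl]

end TupleCount

open PowerSeries Polynomial in
theorem theta_generating_function_general (a : ℕ → ℝ) (n : ℕ) :
    PowerSeries.mk (fun k => thetaPoly a n k) =
      ∏ m ∈ Finset.Icc 1 n,
        (1 + (PowerSeries.C (R := Polynomial ℝ) (Polynomial.C (a m)) * PowerSeries.X) *
          PowerSeries.invOfUnit
            (1 - PowerSeries.C (R := Polynomial ℝ) (Polynomial.C (a m) * Polynomial.X) *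
              PowerSeries.X) 1) := by
  refine PowerSeries.ext fun k => ?_
  simp only [PowerSeries.coeff_mk, PowerSeries.coeff_prod,
    PowerSeries.coeff_one_add_C_mul_X_mul_invOfUnit, thetaPoly]
  refine sum_bij (fun ℓ _ => tupleCount ℓ)
    (fun _ hℓ => tupleCount_mem_finsuppAntidiag (mem_multisetTuples.mp hℓ).1)
    (fun ℓ₁ h₁ ℓ₂ h₂ => tupleCount_injOn (mem_multisetTuples.mp h₁).2 (mem_multisetTuples.mp h₂).2)
    (fun c hc => let ⟨ℓ, hℓ, hc⟩ := exists_tupleCount_eq hc; ⟨ℓ, hℓ, hc⟩) fun ℓ hℓ => ?_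
  obtain ⟨hrange, hanti⟩ := mem_multisetTuples.mp hℓ
  rw [map_prod]
  exact prod_mul_pow_sigmaEq (Polynomial.C ∘ a) _ hanti (image_subset_iff.mpr fun i _ => hrange i)

open PowerSeries Polynomial in
theorem theta_generating_function (a : ℕ → ℝ) (n : ℕ) (hn : 1 ≤ n) :
    PowerSeries.mk (fun k => thetaPoly a n k) =
      ∏ m ∈ Finset.Icc 1 n,
        (1 + (PowerSeries.C (R := Polynomial ℝ) (Polynomial.C (a m)) * PowerSeries.X) *
          PowerSeries.invOfUnit
            (1 - PowerSeries.C (R := Polynomial ℝ) (Polynomial.C (a m) * Polynomial.X) *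
              PowerSeries.X) 1) :=
  theta_generating_function_general a n
end

section
/- For every n ≥ 1, the generating function identity holds as formal power series in z over the polynomial ring in t: ∏_{m=1}^{n}(1 + a_m z/(1 - a_m z t)) = exp(∑_{j ≥ 1} (z^j / j) · A_n(j) · (t^j - (t-1)^j)), where A_n(j) = ∑_{m=1}^{n} a_m^j. -/
open PowerSeries Polynomial

/-- Exponential of a formal power series with zero constant term:
the coefficient of `z^n` in `exp F = ∑_k F^k / k!` (only `k ≤ n` contribute). -/
noncomputable def expPS (F : PowerSeries (Polynomial ℝ)) : PowerSeries (Polynomial ℝ) :=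
  PowerSeries.mk fun n =>
    ∑ k ∈ Finset.range (n + 1), (k.factorial : ℝ)⁻¹ • PowerSeries.coeff n (F ^ k)

/-- The power sums `A_n(j) = ∑_{m=1}^n a_m^j`. -/
def powerSum (a : ℕ → ℝ) (n j : ℕ) : ℝ := ∑ m ∈ Finset.Icc 1 n, a m ^ j

/-! Each factor is `(1 - a(t-1)z) / (1 - atz)`, whose logarithmic derivative
`at/(1 - atz) - a(t-1)/(1 - a(t-1)z)` is the derivative of the `m`-th part of the exponent.
Hence both sides solve `E' = F' E` with `E(0) = 1`: for the exponential this is the chain rule,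
since `expPS F` is `exp` composed with `F`. Such solutions are unique, because the
equation determines `(k+1) e_{k+1}` from `e_0, …, e_k`. -/

namespace PowerSeries

section Geometric

variable {R : Type*} [CommRing R]

theorem coeff_invOfUnit_one_sub_C_mul_X (p : R) (n : ℕ) :
    coeff n (invOfUnit (1 - C p * X) 1) = p ^ n := by
  induction n with
  | zero => simp
  | succ n ih =>
    have h := congrArg (coeff (n + 1)) (mul_invOfUnit (1 - C p * X) 1 (by simp))
    rw [sub_mul, one_mul, map_sub, mul_assoc, coeff_C_mul, coeff_succ_X_mul, ih,
      coeff_one, if_neg n.succ_ne_zero, sub_eq_zero] at h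
    rw [h, pow_succ']

theorem derivative_invOfUnit_one_sub_C_mul_X (p : R) :
    d⁄dX R (invOfUnit (1 - C p * X) 1) = C p * invOfUnit (1 - C p * X) 1 ^ 2 := by
  set g := invOfUnit (1 - C p * X) 1
  have hg : (1 - C p * X) * g = 1 := mul_invOfUnit _ _ (by simp)
  have hd := congrArg (d⁄dX R) hg
  simp only [Derivation.leibniz, map_sub, derivative_one, derivative_C, derivative_X,
    smul_eq_mul] at hd
  linear_combination g * hd - d⁄dX R g * hg

theorem one_add_C_mul_X_mul_invOfUnit (c p : R) :
    1 + C c * X * invOfUnit (1 - C p * X) 1 =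
      (1 - C (p - c) * X) * invOfUnit (1 - C p * X) 1 := by
  linear_combination (exp := 1) -(mul_invOfUnit (1 - C p * X) 1 (by simp)) +
    X * invOfUnit (1 - C p * X) 1 * map_sub C p c

theorem derivative_one_sub_C_mul_X_mul_invOfUnit (p q : R) :
    d⁄dX R ((1 - C q * X) * invOfUnit (1 - C p * X) 1) =
      (C p * invOfUnit (1 - C p * X) 1 - C q * invOfUnit (1 - C q * X) 1) *
        ((1 - C q * X) * invOfUnit (1 - C p * X) 1) := by
  have hq : (1 - C q * X) * invOfUnit (1 - C q * X) 1 = 1 := mul_invOfUnit _ _ (by simp)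
  rw [Derivation.leibniz, derivative_invOfUnit_one_sub_C_mul_X]
  simp only [map_sub, derivative_one, Derivation.leibniz, derivative_C, derivative_X, smul_eq_mul]
  linear_combination (C q * invOfUnit (1 - C p * X) 1) * hq

end Geometric

-- Not stated for an arbitrary derivation: `Algebra R[X] R[X]⟦X⟧` has two instances that are
-- not defeq, and instance search would not pick the one `d⁄dX R[X]` is built on.
theorem derivative_prod_of_eq_mul {R ι : Type*} [CommSemiring R] {s : Finset ι}
    {f g : ι → R⟦X⟧} (h : ∀ i ∈ s, d⁄dX R (f i) = g i * f i) :
    d⁄dX R (∏ i ∈ s, f i) = (∑ i ∈ s, g i) * ∏ i ∈ s, f i := by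
  classical
  induction s using Finset.induction_on with
  | empty => simp
  | insert i s hi ih =>
    rw [Finset.prod_insert hi, Finset.sum_insert hi, Derivation.leibniz, smul_eq_mul,
      smul_eq_mul, h i (Finset.mem_insert_self i s),
      ih fun j hj => h j (Finset.mem_insert_of_mem hj)]
    ring

section Uniqueness

variable {R : Type*} [CommRing R] [IsAddTorsionFree R]

theorem eq_zero_of_derivative_eq_mul {G D : R⟦X⟧} (hD : d⁄dX R D = G * D)
    (h0 : constantCoeff D = 0) : D = 0 := by
  ext n
  induction n using Nat.strong_induction_on with
  | _ n ih =>
    cases n with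
    | zero => simpa using h0
    | succ n =>
      have h : coeff n (d⁄dX R D) = 0 := by
        rw [hD, coeff_mul]
        refine Finset.sum_eq_zero fun x hx => ?_
        rw [ih x.2 (Nat.lt_succ_of_le (Finset.HasAntidiagonal.antidiagonal.snd_le hx)),
          map_zero, mul_zero]
      rw [coeff_derivative, ← Nat.cast_succ, mul_comm, ← nsmul_eq_mul] at h
      simpa using (smul_eq_zero.mp h).resolve_left n.succ_ne_zero

theorem eq_of_derivative_eq_mul {G E₁ E₂ : R⟦X⟧} (h₁ : d⁄dX R E₁ = G * E₁)
    (h₂ : d⁄dX R E₂ = G * E₂) (h0 : constantCoeff E₁ = constantCoeff E₂) : E₁ = E₂ :=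
  sub_eq_zero.mp <| eq_zero_of_derivative_eq_mul (G := G)
    (by rw [map_sub, h₁, h₂, mul_sub]) (by rw [map_sub, h0, sub_self])

end Uniqueness

theorem coeff_pow_eq_zero_of_lt {R : Type*} [CommSemiring R] {F : R⟦X⟧}
    (hF : constantCoeff F = 0) {n k : ℕ} (h : n < k) : coeff n (F ^ k) = 0 := by
  obtain ⟨G, rfl⟩ := X_dvd_iff.mpr hF
  rw [mul_pow, coeff_X_pow_mul', if_neg (by omega)]

end PowerSeries

theorem expPS_eq_subst_exp {F : ℝ[X]⟦X⟧} (hF : constantCoeff F = 0) :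
    expPS F = (exp ℝ[X]).subst F := by
  ext1 n
  have hsupp : (Function.support fun k => coeff k (exp ℝ[X]) • coeff n (F ^ k)) ⊆
      Finset.range (n + 1) := by
    intro k hk
    contrapose! hk
    simp [coeff_pow_eq_zero_of_lt hF (by simpa using hk)]
  rw [expPS, coeff_mk, coeff_subst' (.of_constantCoeff_zero' hF),
    finsum_eq_sum_of_support_subset _ hsupp]
  refine Finset.sum_congr rfl fun k _ => ?_
  simp [coeff_exp, Polynomial.smul_eq_C_mul]

theorem derivative_expPS {F : ℝ[X]⟦X⟧} (hF : constantCoeff F = 0) :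
    d⁄dX ℝ[X] (expPS F) = d⁄dX ℝ[X] F * expPS F := by
  rw [expPS_eq_subst_exp hF, derivative_subst (.of_constantCoeff_zero' hF), derivative_exp,
    mul_comm]

theorem constantCoeff_expPS (F : ℝ[X]⟦X⟧) : constantCoeff (expPS F) = 1 := by
  simp [expPS]

theorem derivative_mk_powerSum (a : ℕ → ℝ) (n : ℕ) :
    d⁄dX ℝ[X] (PowerSeries.mk fun j => if j = 0 then 0 else
        Polynomial.C (powerSum a n j / (j : ℝ)) * (Polynomial.X ^ j - (Polynomial.X - 1) ^ j)) =
      ∑ m ∈ Finset.Icc 1 n,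
        (PowerSeries.C (Polynomial.C (a m) * Polynomial.X) *
            invOfUnit (1 - PowerSeries.C (Polynomial.C (a m) * Polynomial.X) * PowerSeries.X) 1 -
          PowerSeries.C (Polynomial.C (a m) * (Polynomial.X - 1)) *
            invOfUnit (1 - PowerSeries.C (Polynomial.C (a m) * (Polynomial.X - 1)) *
              PowerSeries.X) 1) := by
  ext1 k
  have hk : ((k : ℝ[X]) + 1) = Polynomial.C ((k + 1 : ℕ) : ℝ) := by simp
  simp only [PowerSeries.coeff_derivative, coeff_mk, if_neg k.succ_ne_zero, map_sum,
    map_sub (PowerSeries.coeff k), PowerSeries.coeff_C_mul, coeff_invOfUnit_one_sub_C_mul_X,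
    powerSum, Finset.sum_div, Finset.sum_mul]
  refine Finset.sum_congr rfl fun m _ => ?_
  rw [hk, mul_right_comm, ← Polynomial.C_mul, div_mul_cancel₀ _ (by positivity)]
  simp only [Polynomial.C_pow, mul_pow]
  ring

theorem product_eq_exp_powerSums_general (a : ℕ → ℝ) (n : ℕ) :
    (∏ m ∈ Finset.Icc 1 n,
      (1 + (PowerSeries.C (Polynomial.C (a m)) * PowerSeries.X) *
        PowerSeries.invOfUnit
          (1 - PowerSeries.C (Polynomial.C (a m) * Polynomial.X) *
            PowerSeries.X) 1)) =
      expPS (PowerSeries.mk fun j =>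
        if j = 0 then 0 else
          Polynomial.C (powerSum a n j / (j : ℝ)) *
            (Polynomial.X ^ j - (Polynomial.X - 1) ^ j)) := by
  refine eq_of_derivative_eq_mul ?_ (derivative_expPS (by simp)) (by simp [constantCoeff_expPS])
  rw [derivative_mk_powerSum]
  refine derivative_prod_of_eq_mul fun m _ => ?_
  rw [one_add_C_mul_X_mul_invOfUnit, ← mul_sub_one]
  exact derivative_one_sub_C_mul_X_mul_invOfUnit _ _

theorem product_eq_exp_powerSums (a : ℕ → ℝ) (n : ℕ) (hn : 1 ≤ n) :
    (∏ m ∈ Finset.Icc 1 n,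
      (1 + (PowerSeries.C (Polynomial.C (a m)) * PowerSeries.X) *
        PowerSeries.invOfUnit
          (1 - PowerSeries.C (Polynomial.C (a m) * Polynomial.X) *
            PowerSeries.X) 1)) =
      expPS (PowerSeries.mk fun j =>
        if j = 0 then 0 else
          Polynomial.C (powerSum a n j / (j : ℝ)) *
            (Polynomial.X ^ j - (Polynomial.X - 1) ^ j)) :=
  product_eq_exp_powerSums_general a n
end

section
/- For weights a_j = 1, the number of weakly decreasing k-tuples ℓ from {1,...,n} with σ(ℓ) = j equals C(n, k-j) · C(k-1, j) for 0 ≤ j ≤ k-1; equivalently, the random variable S_{n,k} counting adjacent equalities in a uniformly random k-multiset of {1,...,n} satisfies P(S_{n,k} = j) = C(n,k-j)·C(k-1,j)/C(n+k-1,k), a hypergeometric distribution. -/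
/-!
An antitone tuple `ℓ : Fin (k + 1) → α` is determined by its set of values together with the set
of positions `t` where `ℓ t = ℓ (t + 1)`. If there are `j` such positions, the value set has
`k + 1 - j` elements, and every pair of a `(k + 1 - j)`-subset of the value range `s` and a
`j`-subset of `Fin k` arises: walk down the value set, stepping to the next smaller value exactly
at the positions outside the chosen subset. Hence the count is `C(#s, k + 1 - j) * C(k, j)`.
-/

open Finset

section AntitoneTuple

variable {α : Type*} [LinearOrder α] {k : ℕ}

def eqPositions (ℓ : Fin (k + 1) → α) : Finset (Fin k) :=
  {t | ℓ t.castSucc = ℓ t.succ}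

lemma card_eqPositions_eq_tail_add (ℓ : Fin (k + 2) → α) :
    #(eqPositions ℓ) = #(eqPositions (Fin.tail ℓ)) + if ℓ 0 = ℓ 1 then 1 else 0 := by
  rw [eqPositions, eqPositions, card_filter, card_filter, Fin.sum_univ_succ, add_comm]
  rfl

lemma image_univ_eq_insert_image_tail {β : Type*} [DecidableEq β] {n : ℕ} (f : Fin (n + 1) → β) :
    univ.image f = insert (f 0) (univ.image (Fin.tail f)) := by
  ext x
  simp [Fin.exists_fin_succ, Fin.tail, eq_comm]

lemma Antitone.card_image_add_card_eqPositions {ℓ : Fin (k + 1) → α} (hℓ : Antitone ℓ) :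
    #(univ.image ℓ) + #(eqPositions ℓ) = k + 1 := by
  induction k with
  | zero => simp [eqPositions]
  | succ k ih =>
    have htail := ih (ℓ := Fin.tail ℓ) (hℓ.comp_monotone Fin.strictMono_succ.monotone)
    rw [image_univ_eq_insert_image_tail, card_eqPositions_eq_tail_add]
    split_ifs with h
    · rw [insert_eq_of_mem (mem_image.mpr ⟨0, mem_univ _, h.symm⟩)]
      omega
    · have h0 : ℓ 0 ∉ univ.image (Fin.tail ℓ) := by
        simp only [mem_image, mem_univ, true_and, not_exists]
        intro i hi
        have h1 : ℓ i.succ ≤ ℓ 1 := hℓ (Fin.succ_le_succ_iff.mpr (Fin.zero_le i))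
        exact h (le_antisymm (hi.symm.trans_le h1) (hℓ (Fin.zero_le 1)))
      rw [card_insert_of_notMem h0]
      omega

lemma Antitone.le_apply_succ_of_lt {ℓ : Fin (k + 1) → α} (hℓ : Antitone ℓ) {t : Fin k}
    {s : Fin (k + 1)} (h : ℓ s < ℓ t.castSucc) : ℓ s ≤ ℓ t.succ :=
  hℓ (Fin.castSucc_lt_iff_succ_le.mp (hℓ.reflect_lt h))

lemma Antitone.eq_of_eqPositions_eq_of_image_eq {ℓ ℓ' : Fin (k + 1) → α} (hℓ : Antitone ℓ)
    (hℓ' : Antitone ℓ') (hE : eqPositions ℓ = eqPositions ℓ')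
    (hI : univ.image ℓ = univ.image ℓ') : ℓ = ℓ' := by
  have mem : ∀ i, ∃ i', ℓ' i' = ℓ i := fun i => by
    simpa [hI] using mem_image_of_mem ℓ (mem_univ i)
  have mem' : ∀ i, ∃ i', ℓ i' = ℓ' i := fun i => by
    simpa [← hI] using mem_image_of_mem ℓ' (mem_univ i)
  funext i
  induction i using Fin.induction with
  | zero =>
    obtain ⟨a, ha⟩ := mem' 0
    obtain ⟨b, hb⟩ := mem 0
    exact le_antisymm (hb ▸ hℓ' (Fin.zero_le b)) (ha ▸ hℓ (Fin.zero_le a))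
  | succ t ih =>
    have hEt : ℓ t.castSucc = ℓ t.succ ↔ ℓ' t.castSucc = ℓ' t.succ := by
      simpa [eqPositions] using congrArg (t ∈ ·) hE
    by_cases ht : ℓ t.castSucc = ℓ t.succ
    · rw [← ht, ← hEt.mp ht, ih]
    · have hlt : ℓ t.succ < ℓ' t.castSucc :=
        ih ▸ lt_of_le_of_ne (hℓ (Fin.castSucc_le_succ t)) (Ne.symm ht)
      have hlt' : ℓ' t.succ < ℓ t.castSucc :=
        ih ▸ lt_of_le_of_ne (hℓ' (Fin.castSucc_le_succ t)) (Ne.symm (mt hEt.mpr ht))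
      obtain ⟨a, ha⟩ := mem t.succ
      obtain ⟨b, hb⟩ := mem' t.succ
      exact le_antisymm (ha ▸ hℓ'.le_apply_succ_of_lt (ha ▸ hlt))
        (hb ▸ hℓ.le_apply_succ_of_lt (hb ▸ hlt'))

lemma card_filter_castSucc_lt_succ (D : Finset (Fin k)) (t : Fin k) :
    #{u ∈ D | u.castSucc < t.succ} =
      #{u ∈ D | u.castSucc < t.castSucc} + if t ∈ D then 1 else 0 := by
  simp only [Fin.castSucc_lt_succ_iff, Fin.castSucc_lt_castSucc_iff, le_iff_lt_or_eq, filter_or]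
  rw [card_union_of_disjoint (disjoint_filter.mpr fun _ _ h => h.ne), filter_eq']
  split_ifs <;> rfl

lemma exists_antitone_eqPositions_eq (A : Finset (Fin k)) (B : Finset α)
    (hB : #B = k + 1 - #A) :
    ∃ ℓ : Fin (k + 1) → α, Antitone ℓ ∧ eqPositions ℓ = A ∧ univ.image ℓ ⊆ B := by
  -- `ℓ i` will be the `r i`-th largest element of `B`, `r i` counting the descents before `i`.
  set r : Fin (k + 1) → ℕ := fun i => #{u ∈ Aᶜ | u.castSucc < i}
  have hr_lt : ∀ i, r i < #B := fun i => by
    have h₁ : r i ≤ k - #A := by simpa [card_compl] using card_filter_le Aᶜ (·.castSucc < i)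
    have h₂ : #A ≤ k := (card_le_univ A).trans (Fintype.card_fin k).le
    omega
  have hr_mono : Monotone r := fun i i' h =>
    card_le_card (monotone_filter_right _ fun _ _ hu => hu.trans_le h)
  set g : Fin #B → α := fun x => B.orderEmbOfFin rfl x.rev
  have hg : StrictAnti g := fun _ _ h => (B.orderEmbOfFin rfl).strictMono (Fin.rev_lt_rev.mpr h)
  refine ⟨fun i => g ⟨r i, hr_lt i⟩,
    fun i i' h => hg.antitone (Fin.mk_le_mk.mpr (hr_mono h)), ?_, ?_⟩
  · ext t
    simp [eqPositions, hg.injective.eq_iff, r, card_filter_castSucc_lt_succ]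
  · intro x hx
    obtain ⟨i, -, rfl⟩ := mem_image.mp hx
    exact B.orderEmbOfFin_mem rfl _

theorem card_filter_antitone_card_eqPositions (s : Finset α) (k j : ℕ) :
    #{ℓ ∈ Fintype.piFinset (fun _ : Fin (k + 1) => s) | Antitone ℓ ∧ #(eqPositions ℓ) = j} =
      (#s).choose (k + 1 - j) * k.choose j := by
  have hchoose : k.choose j = #(univ.powersetCard j : Finset (Finset (Fin k))) := by simp
  rw [hchoose, ← card_powersetCard, ← card_product]
  refine card_bij (fun ℓ _ => (univ.image ℓ, eqPositions ℓ)) ?_ ?_ ?_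
  · intro ℓ hℓ
    simp only [mem_filter, Fintype.mem_piFinset] at hℓ
    obtain ⟨hs, hanti, hj⟩ := hℓ
    have := hanti.card_image_add_card_eqPositions
    simp only [mem_product, mem_powersetCard]
    exact ⟨⟨image_subset_iff.mpr fun i _ => hs i, by omega⟩, subset_univ _, hj⟩
  · intro ℓ hℓ ℓ' hℓ' h
    simp only [mem_filter] at hℓ hℓ'
    obtain ⟨hI, hE⟩ := Prod.ext_iff.mp h
    exact hℓ.2.1.eq_of_eqPositions_eq_of_image_eq hℓ'.2.1 hE hI
  · rintro ⟨B, A⟩ hAB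
    simp only [mem_product, mem_powersetCard, subset_univ, true_and] at hAB
    obtain ⟨⟨hBs, hB⟩, hA⟩ := hAB
    obtain ⟨ℓ, hanti, hE, hI⟩ := exists_antitone_eqPositions_eq A B (hA ▸ hB)
    have hcard := hanti.card_image_add_card_eqPositions
    have hI' : univ.image ℓ = B := eq_of_subset_of_card_le hI (by rw [hE] at hcard; omega)
    refine ⟨ℓ, ?_, by rw [hI', hE]⟩
    simp only [mem_filter, Fintype.mem_piFinset, hanti, hE, hA, and_true]
    exact fun i => hBs (hI (mem_image_of_mem ℓ (mem_univ i)))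

end AntitoneTuple

lemma sigmaEq_eq_card_eqPositions {k : ℕ} (ℓ : Fin (k + 1) → ℕ) :
    sigmaEq ℓ = #(eqPositions ℓ) := by
  refine (card_bij (fun t _ => (t.castSucc, t.succ)) ?_ ?_ ?_).symm
  · intro t ht
    simpa [eqPositions] using ht
  · intro a _ b _ h
    exact Fin.castSucc_injective _ (Prod.ext_iff.mp h).1
  · rintro ⟨a, b⟩ hab
    simp only [mem_filter, mem_univ, true_and] at hab
    obtain ⟨hb, he⟩ := hab
    have ha : (a : ℕ) < k := by omega
    obtain rfl : b = (Fin.mk a ha).succ := Fin.ext hb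
    exact ⟨⟨a, ha⟩, by simpa [eqPositions] using he, rfl⟩

theorem sigma_distribution_hypergeometric_general (n k j : ℕ) :
    ((multisetTuples n k).filter fun ℓ => sigmaEq ℓ = j).card =
      n.choose (k - j) * (k - 1).choose j := by
  rcases k with _ | k
  · rcases j with _ | j <;> simp [multisetTuples, sigmaEq, filter_true_of_mem]
  have := card_filter_antitone_card_eqPositions (Finset.Icc 1 n) k j
  simp only [Nat.card_Icc, add_tsub_cancel_right] at this
  simp only [multisetTuples, filter_filter, sigmaEq_eq_card_eqPositions, add_tsub_cancel_right]
  exact this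

theorem sigma_distribution_hypergeometric (n k j : ℕ) (hn : 1 ≤ n) (hk : 1 ≤ k)
    (hj : j ≤ k - 1) :
    ((multisetTuples n k).filter fun ℓ => sigmaEq ℓ = j).card =
      n.choose (k - j) * (k - 1).choose j :=
  sigma_distribution_hypergeometric_general n k j
end

section
/- For all n ≥ 1 and k ≥ 2, ∑_{n ≥ ℓ_1 ≥ ... ≥ ℓ_k ≥ 1} σ(ℓ)/(ℓ_1···ℓ_k) = ∑_{m=0}^{k-2} H_n^{(m+2)} · ζ*_n({1}_{k-m-2}), where H_n^{(r)} = ∑_{i=1}^n 1/i^r and ζ*_n({1}_j) = ∑_{n ≥ ℓ_1 ≥ ... ≥ ℓ_j ≥ 1} 1/(ℓ_1···ℓ_j) with ζ*_n({1}_0) = 1. -/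
/-- Generalized harmonic number $H_n^{(r)}$. -/
noncomputable def genHarmonic (n r : ℕ) : ℝ := ∑ i ∈ Finset.Icc 1 n, (1 : ℝ) / (i : ℝ) ^ r

/-- Truncated multiple zeta star value ζ*_n({1}_j). -/
noncomputable def zetaStarOnes (n j : ℕ) : ℝ :=
  ∑ ℓ ∈ multisetTuples n j, ∏ i, (1 : ℝ) / (ℓ i : ℝ)

/-!
Write `S_k(n)` for the left-hand side and `h = 1/(n+1)`. Both sides vanish for `n = 0` and
satisfy the same recursion in `n`. Splitting off the tuples whose largest entry is `n + 1`, `σ`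
gains one exactly when the second entry is `n + 1` as well, so
`S_{k+2}(n+1) = S_{k+2}(n) + h (h ζ*_{n+1}({1}_k) + S_{k+1}(n+1))`.
Written as the convolution `∑_{i+j=k} H_n^{(i+2)} ζ*_n({1}_j)`, the right-hand side obeys the
same recursion because `H_{n+1}^{(r)} = H_n^{(r)} + h^r` and
`ζ*_{n+1}({1}_k) = ∑_{i+j=k} h^i ζ*_n({1}_j)`, where `i` counts the entries equal to `n + 1`.
-/

open Finset

theorem mem_multisetTuples_cons {n k a : ℕ} {t : Fin k → ℕ} :
    Fin.cons a t ∈ multisetTuples n (k + 1) ↔ a ∈ Icc 1 n ∧ t ∈ multisetTuples a k := by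
  simp only [multisetTuples, mem_filter, Fintype.mem_piFinset, Fin.forall_fin_succ,
    Fin.cons_zero, Fin.cons_succ, mem_Icc, Fin.succ_le_succ_iff]
  grind

theorem sum_multisetTuples_succ {M : Type*} [AddCommMonoid M] (n k : ℕ)
    (f : (Fin (k + 1) → ℕ) → M) :
    ∑ ℓ ∈ multisetTuples n (k + 1), f ℓ =
      ∑ a ∈ Icc 1 n, ∑ t ∈ multisetTuples a k, f (Fin.cons a t) := by
  rw [sum_sigma']
  refine sum_nbij' (fun ℓ => ⟨ℓ 0, Fin.tail ℓ⟩) (fun p => Fin.cons p.1 p.2) ?_ ?_ ?_ ?_ ?_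
  · intro ℓ hℓ
    rw [← Fin.cons_self_tail ℓ, mem_multisetTuples_cons] at hℓ
    simpa using hℓ
  · rintro ⟨a, t⟩ h
    simpa [mem_multisetTuples_cons] using h
  · intro ℓ _
    simp
  · rintro ⟨a, t⟩ _
    simp
  · intro ℓ _
    simp

theorem sum_multisetTuples_succ_succ {M : Type*} [AddCommMonoid M] (n k : ℕ)
    (f : (Fin (k + 1) → ℕ) → M) :
    ∑ ℓ ∈ multisetTuples (n + 1) (k + 1), f ℓ =
      ∑ ℓ ∈ multisetTuples n (k + 1), f ℓ +
        ∑ t ∈ multisetTuples (n + 1) k, f (Fin.cons (n + 1) t) := by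
  rw [sum_multisetTuples_succ, sum_multisetTuples_succ, sum_Icc_succ_top (by omega)]

theorem prod_one_div_cons {k : ℕ} (a : ℕ) (t : Fin k → ℕ) :
    ∏ i, (1 : ℝ) / ((Fin.cons a t : Fin (k + 1) → ℕ) i : ℝ) =
      (a : ℝ)⁻¹ * ∏ i, (1 : ℝ) / (t i : ℝ) := by
  simp [Fin.prod_univ_succ, mul_comm]

theorem sigmaEq_eq_card {k : ℕ} (ℓ : Fin (k + 1) → ℕ) :
    sigmaEq ℓ = #{i : Fin k | ℓ i.castSucc = ℓ i.succ} := by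
  symm
  apply card_bij (fun i _ => (i.castSucc, i.succ))
  · intro i hi
    simpa using hi
  · intro i _ j _ h
    simpa using congrArg Prod.fst h
  · rintro ⟨p, q⟩ hpq
    simp only [mem_filter, mem_univ, true_and] at hpq
    obtain ⟨hq, hℓ⟩ := hpq
    refine ⟨⟨p, by omega⟩, ?_, by simp [Fin.ext_iff, hq]⟩
    simp only [mem_filter, mem_univ, true_and]
    convert hℓ using 2 <;> simp [Fin.ext_iff, hq]

theorem sigmaEq_cons {k : ℕ} (a : ℕ) (t : Fin (k + 1) → ℕ) :
    sigmaEq (Fin.cons a t : Fin (k + 2) → ℕ) = (if a = t 0 then 1 else 0) + sigmaEq t := by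
  rw [sigmaEq_eq_card, sigmaEq_eq_card, card_filter, card_filter, Fin.sum_univ_succ]
  simp [Fin.cons_succ]

theorem sigmaEq_eq_zero {k : ℕ} (hk : k ≤ 1) (ℓ : Fin k → ℕ) : sigmaEq ℓ = 0 := by
  refine card_eq_zero.mpr (filter_eq_empty_iff.mpr fun p _ h => ?_)
  have := p.2.isLt
  omega

theorem genHarmonic_zero_left (r : ℕ) : genHarmonic 0 r = 0 := by
  simp [genHarmonic]

theorem genHarmonic_succ (n r : ℕ) :
    genHarmonic (n + 1) r = genHarmonic n r + ((n : ℝ) + 1)⁻¹ ^ r := by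
  rw [genHarmonic, genHarmonic, sum_Icc_succ_top (by omega)]
  simp [inv_pow]

theorem zetaStarOnes_zero (n : ℕ) : zetaStarOnes n 0 = 1 := by
  simp [zetaStarOnes, multisetTuples]

theorem zetaStarOnes_succ_succ (n k : ℕ) :
    zetaStarOnes (n + 1) (k + 1) =
      zetaStarOnes n (k + 1) + ((n : ℝ) + 1)⁻¹ * zetaStarOnes (n + 1) k := by
  simp only [zetaStarOnes, sum_multisetTuples_succ_succ, prod_one_div_cons, mul_sum]
  push_cast
  rfl

theorem zetaStarOnes_succ_left (n k : ℕ) :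
    zetaStarOnes (n + 1) k =
      ∑ p ∈ antidiagonal k, ((n : ℝ) + 1)⁻¹ ^ p.1 * zetaStarOnes n p.2 := by
  induction k with
  | zero => simp [zetaStarOnes_zero]
  | succ k ih =>
    rw [zetaStarOnes_succ_succ, ih, Nat.sum_antidiagonal_succ, mul_sum, pow_zero, one_mul]
    exact congrArg _ (sum_congr rfl fun p _ => by ring)

noncomputable def sigmaWeightedSum (n k : ℕ) : ℝ :=
  ∑ ℓ ∈ multisetTuples n k, (sigmaEq ℓ : ℝ) * ∏ i, (1 : ℝ) / (ℓ i : ℝ)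

theorem sigmaWeightedSum_of_le_one (n : ℕ) {k : ℕ} (hk : k ≤ 1) : sigmaWeightedSum n k = 0 :=
  sum_eq_zero fun ℓ _ => by rw [sigmaEq_eq_zero hk, Nat.cast_zero, zero_mul]

theorem sigmaWeightedSum_zero_left (k : ℕ) : sigmaWeightedSum 0 (k + 1) = 0 := by
  simp [sigmaWeightedSum, sum_multisetTuples_succ]

theorem sum_ite_head_eq_mul_zetaStarOnes (n k : ℕ) :
    ∑ t ∈ multisetTuples (n + 1) (k + 1),
        (if n + 1 = t 0 then (1 : ℝ) else 0) * ∏ i, (1 : ℝ) / (t i : ℝ) =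
      ((n : ℝ) + 1)⁻¹ * zetaStarOnes (n + 1) k := by
  have head_le : ∀ t ∈ multisetTuples n (k + 1), t 0 ≤ n := fun t ht =>
    (mem_Icc.mp (Fintype.mem_piFinset.mp (mem_filter.mp ht).1 0)).2
  rw [sum_multisetTuples_succ_succ, sum_eq_zero fun t ht => by
    rw [if_neg (by have := head_le t ht; omega), zero_mul], zero_add]
  simp only [Fin.cons_zero, if_true, one_mul, prod_one_div_cons, zetaStarOnes, mul_sum]
  push_cast
  rfl

theorem sigmaWeightedSum_succ_succ (n k : ℕ) :
    sigmaWeightedSum (n + 1) (k + 2) = sigmaWeightedSum n (k + 2) +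
      ((n : ℝ) + 1)⁻¹ *
        (((n : ℝ) + 1)⁻¹ * zetaStarOnes (n + 1) k + sigmaWeightedSum (n + 1) (k + 1)) := by
  rw [sigmaWeightedSum, sum_multisetTuples_succ_succ, ← sum_ite_head_eq_mul_zetaStarOnes]
  congr 1
  simp only [sigmaWeightedSum, sigmaEq_cons, prod_one_div_cons, mul_sum, ← sum_add_distrib]
  refine sum_congr rfl fun t _ => ?_
  push_cast
  ring

noncomputable def harmonicZetaConv (n k : ℕ) : ℝ :=
  ∑ p ∈ antidiagonal k, genHarmonic n (p.1 + 2) * zetaStarOnes n p.2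

theorem harmonicZetaConv_zero_left (k : ℕ) : harmonicZetaConv 0 k = 0 := by
  simp [harmonicZetaConv, genHarmonic_zero_left]

theorem harmonicZetaConv_succ_zero (n : ℕ) :
    harmonicZetaConv (n + 1) 0 = harmonicZetaConv n 0 + ((n : ℝ) + 1)⁻¹ ^ 2 := by
  simp [harmonicZetaConv, genHarmonic_succ, zetaStarOnes_zero]

theorem harmonicZetaConv_succ_succ (n k : ℕ) :
    harmonicZetaConv (n + 1) (k + 1) = harmonicZetaConv n (k + 1) +
      ((n : ℝ) + 1)⁻¹ *
        (((n : ℝ) + 1)⁻¹ * zetaStarOnes (n + 1) (k + 1) + harmonicZetaConv (n + 1) k) := by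
  have top_slice : ((n : ℝ) + 1)⁻¹ ^ 2 * zetaStarOnes (n + 1) (k + 1) =
      ((n : ℝ) + 1)⁻¹ ^ (k + 3) +
        ∑ p ∈ antidiagonal k, ((n : ℝ) + 1)⁻¹ ^ (p.1 + 2) * zetaStarOnes n (p.2 + 1) := by
    rw [zetaStarOnes_succ_left, Nat.sum_antidiagonal_succ', zetaStarOnes_zero, mul_add, mul_sum]
    exact congr_arg₂ _ (by ring) (sum_congr rfl fun p _ => by ring)
  have expand : ∑ p ∈ antidiagonal k,
      genHarmonic (n + 1) (p.1 + 2) * zetaStarOnes (n + 1) (p.2 + 1) =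
      ∑ p ∈ antidiagonal k, genHarmonic n (p.1 + 2) * zetaStarOnes n (p.2 + 1) +
        ∑ p ∈ antidiagonal k, ((n : ℝ) + 1)⁻¹ ^ (p.1 + 2) * zetaStarOnes n (p.2 + 1) +
        ((n : ℝ) + 1)⁻¹ * harmonicZetaConv (n + 1) k := by
    rw [harmonicZetaConv, mul_sum, ← sum_add_distrib, ← sum_add_distrib]
    refine sum_congr rfl fun p _ => ?_
    rw [genHarmonic_succ, zetaStarOnes_succ_succ]
    ring
  rw [harmonicZetaConv, harmonicZetaConv, Nat.sum_antidiagonal_succ', Nat.sum_antidiagonal_succ',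
    expand, genHarmonic_succ n (k + 1 + 2), zetaStarOnes_zero, zetaStarOnes_zero]
  linear_combination -top_slice

theorem sigmaWeightedSum_eq_harmonicZetaConv :
    ∀ n k : ℕ, sigmaWeightedSum n (k + 2) = harmonicZetaConv n k
  | 0, k => by rw [sigmaWeightedSum_zero_left, harmonicZetaConv_zero_left]
  | n + 1, 0 => by
    rw [sigmaWeightedSum_succ_succ, sigmaWeightedSum_eq_harmonicZetaConv n 0,
      sigmaWeightedSum_of_le_one _ le_rfl, zetaStarOnes_zero, harmonicZetaConv_succ_zero]
    ring
  | n + 1, k + 1 => by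
    rw [sigmaWeightedSum_succ_succ, sigmaWeightedSum_eq_harmonicZetaConv n (k + 1),
      sigmaWeightedSum_eq_harmonicZetaConv (n + 1) k, harmonicZetaConv_succ_succ]

theorem expected_sigma_zeta_general (n k : ℕ) :
    (∑ ℓ ∈ multisetTuples n k, (sigmaEq ℓ : ℝ) * ∏ i, (1 : ℝ) / (ℓ i : ℝ)) =
      ∑ m ∈ Finset.range (k - 1), genHarmonic n (m + 2) * zetaStarOnes n (k - m - 2) := by
  change sigmaWeightedSum n k = _
  rcases Nat.lt_or_ge k 2 with hk | hk
  · rw [sigmaWeightedSum_of_le_one n (by omega), Nat.sub_eq_zero_of_le (by omega), range_zero,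
      sum_empty]
  · obtain ⟨k, rfl⟩ := Nat.exists_eq_add_of_le' hk
    rw [sigmaWeightedSum_eq_harmonicZetaConv, harmonicZetaConv,
      Nat.sum_antidiagonal_eq_sum_range_succ fun i j => genHarmonic n (i + 2) * zetaStarOnes n j]
    exact sum_congr rfl fun m _ => by congr 2; omega

theorem expected_sigma_zeta (n k : ℕ) (hn : 1 ≤ n) (hk : 2 ≤ k) :
    (∑ ℓ ∈ multisetTuples n k, (sigmaEq ℓ : ℝ) * ∏ i, (1 : ℝ) / (ℓ i : ℝ)) =
      ∑ m ∈ Finset.range (k - 1), genHarmonic n (m + 2) * zetaStarOnes n (k - m - 2) :=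
  expected_sigma_zeta_general n k
end

section
/- For m ≥ 2 and k ≥ 0, the interpolated multiple zeta value satisfies ζ^t({m}_k) = ∑_{j=0}^{k} t^j ζ*({m}_j) (1-t)^{k-j} ζ({m}_{k-j}), where ζ({m}_j) = ∑_{ℓ_1 > ... > ℓ_j ≥ 1} 1/(ℓ_1···ℓ_j)^m and ζ*({m}_j) is the analogous sum over weakly decreasing indices, and ζ^t({m}_k) = ∑_{ℓ_1 ≥ ... ≥ ℓ_k ≥ 1} t^{σ(ℓ)}/(ℓ_1···ℓ_k)^m. -/
/-- Multiple zeta value ζ({m}_j): sum over strictly decreasing j-tuples of positive integers. -/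
noncomputable def zetaConst (m j : ℕ) : ℝ :=
  ∑' ℓ : {ℓ : Fin j → ℕ // (∀ i, 1 ≤ ℓ i) ∧ ∀ a b : Fin j, a < b → ℓ b < ℓ a},
    ∏ i, (1 : ℝ) / ((ℓ : Fin j → ℕ) i : ℝ) ^ m

/-- Multiple zeta star value ζ*({m}_j): sum over weakly decreasing j-tuples. -/
noncomputable def zetaStarConst (m j : ℕ) : ℝ :=
  ∑' ℓ : {ℓ : Fin j → ℕ // (∀ i, 1 ≤ ℓ i) ∧ ∀ a b : Fin j, a ≤ b → ℓ b ≤ ℓ a},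
    ∏ i, (1 : ℝ) / ((ℓ : Fin j → ℕ) i : ℝ) ^ m

/-- Interpolated multiple zeta value ζ^t({m}_k). -/
noncomputable def zetaInterpConst (t : ℝ) (m k : ℕ) : ℝ :=
  ∑' ℓ : {ℓ : Fin k → ℕ // (∀ i, 1 ≤ ℓ i) ∧ ∀ a b : Fin k, a ≤ b → ℓ b ≤ ℓ a},
    t ^ sigmaEq (ℓ : Fin k → ℕ) * ∏ i, (1 : ℝ) / ((ℓ : Fin k → ℕ) i : ℝ) ^ m

/-!
Weakly decreasing `k`-tuples are the multisets `M` of size `k`, strictly decreasing ones the finite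
sets, and `σ(ℓ) = k - d(M)`, where `d(M)` is the number of distinct entries. Expanding
`1 = (t + (1 - t))^d` gives `t^(k-d) = ∑ᵢ (d choose i) t^(k-i) (1-t)^i`, and `(d choose i)` counts
the `i`-subsets `S` of the support of `M`. Since `(M, S) ↦ (M - S, S)` is a bijection onto the pairs
(multiset of size `k - i`, set of size `i`), summing `(d choose i) ∏_{n ∈ M} n^(-m)` over `M` gives
`ζ*({m}_(k-i)) ζ({m}_i)`.
-/

open Finset Function

variable {α : Type*}

theorem Summable.of_comp_surjective {β E : Type*} [AddCommGroup E] [UniformSpace E]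
    [IsUniformAddGroup E] [CompleteSpace E] {f : α → E} {π : β → α} (hπ : Surjective π)
    (h : Summable (f ∘ π)) : Summable f :=
  (h.comp_injective (injective_surjInv hπ)).congr fun a => by simp [surjInv_eq hπ]

section SymmetricSums

variable {u : α → ℝ}

theorem summable_sym_prod_map (hu0 : 0 ≤ u) (hu : Summable u) :
    ∀ k, Summable fun s : Sym α k => ((s : Multiset α).map u).prod
  | 0 => (hasSum_fintype _).summable
  | k + 1 => by
    classical
    refine .of_comp_surjective (π := fun p : α × Sym α k => p.1 ::ₛ p.2) ?_ ?_
    · intro s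
      obtain ⟨a, ha⟩ := s.exists_mem
      obtain ⟨t, rfl⟩ := Sym.exists_cons_of_mem ha
      exact ⟨(a, t), rfl⟩
    · refine (hu.mul_of_nonneg (summable_sym_prod_map hu0 hu k) hu0
        fun s => Multiset.prod_map_nonneg fun a _ => hu0 a).congr fun p => ?_
      simp [Sym.coe_cons]

theorem summable_finset_prod (hu0 : 0 ≤ u) (hu : Summable u) (k : ℕ) :
    Summable fun S : {S : Finset α // S.card = k} => ∏ a ∈ S.1, u a := by
  have hinj : Injective fun S : {S : Finset α // S.card = k} => (⟨S.1.val, S.2⟩ : Sym α k) :=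
    fun S T h => Subtype.ext (val_injective (congrArg Subtype.val h))
  exact ((summable_sym_prod_map hu0 hu k).comp_injective hinj).congr fun S => rfl

variable [DecidableEq α] (u)

noncomputable def completeSum (j : ℕ) : ℝ :=
  ∑' s : Sym α j, ((s : Multiset α).map u).prod

noncomputable def elementarySum (j : ℕ) : ℝ :=
  ∑' S : {S : Finset α // S.card = j}, ∏ a ∈ S.1, u a

/-- `k - #s.toFinset` is the number `σ` of adjacent equalities in the sorted tuple of `s`. -/
noncomputable def interpolatedSum (t : ℝ) (k : ℕ) : ℝ :=
  ∑' s : Sym α k, t ^ (k - (s : Multiset α).toFinset.card) * ((s : Multiset α).map u).prod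

variable {u}

theorem hasSum_ite_mem_powersetCard_toFinset (hu0 : 0 ≤ u) (hu : Summable u) {i j k : ℕ}
    (hk : j + i = k) :
    HasSum (fun p : Sym α k × Finset α =>
        if p.2 ∈ (p.1 : Multiset α).toFinset.powersetCard i then ((p.1 : Multiset α).map u).prod
        else 0)
      (completeSum u j * elementarySum u i) := by
  let φ : Sym α j × {S : Finset α // S.card = i} → Sym α k × Finset α := fun p =>
    (⟨p.1 + p.2.1.val, by simp [← hk, p.2.2]⟩, p.2.1)
  have hφ : Injective φ := by
    rintro ⟨A, S⟩ ⟨B, T⟩ h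
    obtain ⟨hAB, hST⟩ := Prod.ext_iff.1 h
    obtain rfl : S = T := Subtype.ext hST
    have hAB' : A = B := Subtype.ext (add_right_cancel (congrArg Subtype.val hAB))
    rw [hAB']
  refine (hφ.hasSum_iff fun ⟨s, S⟩ hp => ?_).mp ?_
  · simp only [ite_eq_right_iff, mem_powersetCard]
    rintro ⟨hS, rfl⟩
    have hle : S.val ≤ s := val_le_iff_val_subset.2 fun a ha => Multiset.mem_toFinset.1 (hS ha)
    refine absurd ⟨(⟨s - S.val, ?_⟩, ⟨S, rfl⟩), ?_⟩ hp
    · rw [Multiset.card_sub hle, Sym.card_coe, ← hk, card_val, Nat.add_sub_cancel]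
    · exact Prod.ext (Subtype.ext (tsub_add_cancel_of_le hle)) rfl
  have hA := summable_sym_prod_map hu0 hu j
  have hS := summable_finset_prod hu0 hu i
  refine (hA.hasSum.mul hS.hasSum (hA.mul_of_nonneg hS
    (fun _ => Multiset.prod_map_nonneg fun a _ => hu0 a)
    (fun _ => prod_nonneg fun a _ => hu0 a))).congr_fun fun p => ?_
  have hmem : p.2.1 ∈ ((φ p).1 : Multiset α).toFinset.powersetCard i :=
    mem_powersetCard.2 ⟨fun a ha => by simp [φ, ha], p.2.2⟩
  refine (if_pos hmem).trans ?_
  show (((p.1 : Multiset α) + p.2.1.val).map u).prod = _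
  rw [Multiset.map_add, Multiset.prod_add]
  rfl

theorem hasSum_choose_card_toFinset_mul_prod (hu0 : 0 ≤ u) (hu : Summable u) {i j k : ℕ}
    (hk : j + i = k) :
    HasSum (fun s : Sym α k =>
        ((s : Multiset α).toFinset.card.choose i : ℝ) * ((s : Multiset α).map u).prod)
      (completeSum u j * elementarySum u i) := by
  refine (hasSum_ite_mem_powersetCard_toFinset hu0 hu hk).prod_fiberwise fun s => ?_
  set P := (s : Multiset α).toFinset.powersetCard i
  have hfiber : HasSum (fun S => if S ∈ P then ((s : Multiset α).map u).prod else 0)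
      (∑ S ∈ P, if S ∈ P then ((s : Multiset α).map u).prod else 0) :=
    hasSum_sum_of_ne_finset_zero fun S hS => if_neg hS
  rwa [sum_eq_card_nsmul (b := ((s : Multiset α).map u).prod) fun S hS => if_pos hS,
    card_powersetCard, nsmul_eq_mul] at hfiber

theorem pow_sub_eq_sum_choose {R : Type*} [CommRing R] (t : R) {n k : ℕ} (h : n ≤ k) :
    t ^ (k - n) = ∑ i ∈ range (k + 1), (n.choose i : R) * t ^ (k - i) * (1 - t) ^ i := by
  have hone : ∑ i ∈ range (n + 1), (1 - t) ^ i * t ^ (n - i) * (n.choose i : R) = 1 := by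
    rw [← add_pow, sub_add_cancel, one_pow]
  calc t ^ (k - n)
      = t ^ (k - n) * ∑ i ∈ range (n + 1), (1 - t) ^ i * t ^ (n - i) * (n.choose i : R) := by
        rw [hone, mul_one]
    _ = ∑ i ∈ range (n + 1), (n.choose i : R) * t ^ (k - i) * (1 - t) ^ i := by
        rw [mul_sum]
        refine sum_congr rfl fun i hi => ?_
        rw [mem_range] at hi
        rw [show k - i = (k - n) + (n - i) by omega, pow_add]
        ring
    _ = ∑ i ∈ range (k + 1), (n.choose i : R) * t ^ (k - i) * (1 - t) ^ i := by
        refine sum_subset (range_subset_range.2 (by omega)) fun i _ hi => ?_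
        rw [Nat.choose_eq_zero_of_lt (by simpa using hi), Nat.cast_zero, zero_mul, zero_mul]

theorem interpolatedSum_eq_sum (hu0 : 0 ≤ u) (hu : Summable u) (t : ℝ) (k : ℕ) :
    interpolatedSum u t k = ∑ j ∈ range (k + 1),
      t ^ j * completeSum u j * (1 - t) ^ (k - j) * elementarySum u (k - j) := by
  have hsum := hasSum_sum fun i (hi : i ∈ range (k + 1)) =>
    (hasSum_choose_card_toFinset_mul_prod hu0 hu (j := k - i)
      (Nat.sub_add_cancel (Nat.lt_succ_iff.1 (mem_range.1 hi)))).mul_left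
        (t ^ (k - i) * (1 - t) ^ i)
  calc interpolatedSum u t k
      = ∑ i ∈ range (k + 1),
          t ^ (k - i) * (1 - t) ^ i * (completeSum u (k - i) * elementarySum u i) := by
        refine (hsum.congr_fun fun s => ?_).tsum_eq
        have hcard : (s : Multiset α).toFinset.card ≤ k :=
          (Multiset.toFinset_card_le _).trans_eq s.card_coe
        rw [pow_sub_eq_sum_choose t hcard, sum_mul]
        exact sum_congr rfl fun i _ => by ring
    _ = _ := by
        rw [← sum_range_reflect]
        refine sum_congr rfl fun j hj => ?_
        rw [mem_range] at hj
        rw [show k + 1 - 1 - j = k - j by omega, show k - (k - j) = j by omega]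
        ring

end SymmetricSums

section Tuples

variable [LinearOrder α] {k : ℕ}

theorem exists_antitone_ofFn_eq (s : Sym α k) :
    ∃ ℓ : Fin k → α, Antitone ℓ ∧ (List.ofFn ℓ : Multiset α) = s := by
  set l := (s : Multiset α).sort (· ≥ ·)
  have hl : l.length = k := by simp [l]
  refine ⟨fun i => l.get (i.cast hl.symm), fun i j hij => ?_, ?_⟩
  · exact (Multiset.pairwise_sort _ _).sortedGE.antitone_get ((Fin.cast_le_cast _).2 hij)
  · rw [← Multiset.sort_eq (s : Multiset α) (· ≥ ·)]
    congr 1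
    exact List.ext_get (by simp) fun n h1 h2 => by simp [l]

theorem eq_of_antitone_of_coe_ofFn_eq {ℓ ℓ' : Fin k → α} (hℓ : Antitone ℓ) (hℓ' : Antitone ℓ')
    (h : (List.ofFn ℓ : Multiset α) = List.ofFn ℓ') : ℓ = ℓ' :=
  List.ofFn_injective <| (Quotient.exact h).eq_of_sortedGE hℓ.sortedGE_ofFn hℓ'.sortedGE_ofFn

theorem val_image_univ_of_injective {ℓ : Fin k → α} (hℓ : Injective ℓ) :
    (univ.image ℓ).val = List.ofFn ℓ := by
  rw [image_val_of_injOn hℓ.injOn, Fin.univ_val_map]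

variable (α k)

noncomputable def antitoneEquivSym : {ℓ : Fin k → α // Antitone ℓ} ≃ Sym α k :=
  Equiv.ofBijective (fun ℓ => ⟨List.ofFn ℓ.1, by simp⟩)
    ⟨fun ℓ ℓ' h => Subtype.ext <| eq_of_antitone_of_coe_ofFn_eq ℓ.2 ℓ'.2 (congrArg Subtype.val h),
      fun s => let ⟨ℓ, hℓ, he⟩ := exists_antitone_ofFn_eq s; ⟨⟨ℓ, hℓ⟩, Subtype.ext he⟩⟩

@[simp]
theorem antitoneEquivSym_apply_coe (ℓ : {ℓ : Fin k → α // Antitone ℓ}) :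
    (antitoneEquivSym α k ℓ : Multiset α) = List.ofFn ℓ.1 :=
  rfl

noncomputable def strictAntiEquivFinset :
    {ℓ : Fin k → α // StrictAnti ℓ} ≃ {S : Finset α // S.card = k} :=
  Equiv.ofBijective
    (fun ℓ => ⟨univ.image ℓ.1, by rw [card_image_of_injective _ ℓ.2.injective, card_fin]⟩)
    ⟨fun ℓ ℓ' h => by
      have hval := congrArg (fun S => S.1.val) h
      simp only [val_image_univ_of_injective ℓ.2.injective,
        val_image_univ_of_injective ℓ'.2.injective] at hval
      exact Subtype.ext (eq_of_antitone_of_coe_ofFn_eq ℓ.2.antitone ℓ'.2.antitone hval),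
    fun S => by
      obtain ⟨ℓ, hℓ, he⟩ := exists_antitone_ofFn_eq (⟨S.1.val, S.2⟩ : Sym α k)
      have hnodup : (List.ofFn ℓ : Multiset α).Nodup := he ▸ S.1.nodup
      have hinj : Injective ℓ := List.nodup_ofFn.1 (Multiset.coe_nodup.1 hnodup)
      exact ⟨⟨ℓ, hℓ.strictAnti_of_injective hinj⟩, Subtype.ext <| val_injective <|
        (val_image_univ_of_injective hinj).trans he⟩⟩

@[simp]
theorem strictAntiEquivFinset_apply_coe (ℓ : {ℓ : Fin k → α // StrictAnti ℓ}) :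
    (strictAntiEquivFinset α k ℓ : Finset α) = univ.image ℓ.1 :=
  rfl

variable {α k}

def repeatPositions (ℓ : Fin k → α) : Finset (Fin k) :=
  {j | ∃ i : Fin k, (j : ℕ) = i + 1 ∧ ℓ i = ℓ j}

theorem card_image_univ_of_antitone {ℓ : Fin k → α} (hℓ : Antitone ℓ) :
    #(univ.image ℓ) = #(repeatPositions ℓ)ᶜ := by
  have hanti : StrictAntiOn ℓ ((repeatPositions ℓ)ᶜ : Finset (Fin k)) := by
    intro j _ j' hj' hlt
    refine (hℓ hlt.le).lt_of_ne fun he => (mem_compl.1 hj') (mem_filter.2 ⟨mem_univ _, ?_⟩)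
    refine ⟨⟨j' - 1, by omega⟩, by dsimp only; omega, le_antisymm ?_ (hℓ ?_)⟩
    · exact he ▸ hℓ (Fin.le_def.2 (by dsimp only; omega))
    · exact Fin.le_def.2 (by dsimp only; omega)
  rw [← card_image_of_injOn hanti.injOn]
  congr 1
  refine (image_subset_image (subset_univ _)).antisymm' fun v hv => ?_
  obtain ⟨j₀, -, rfl⟩ := mem_image.1 hv
  -- the first position of a value is not a repeat position
  obtain ⟨j, hj, hmin⟩ := (univ.filter fun j => ℓ j = ℓ j₀).exists_min_image id ⟨j₀, by simp⟩
  refine mem_image.2 ⟨j, mem_compl.2 fun hrep => ?_, (mem_filter.1 hj).2⟩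
  obtain ⟨i, hij, he⟩ := (mem_filter.1 hrep).2
  have := hmin i (by simp [he, (mem_filter.1 hj).2])
  simp only [id, Fin.le_def] at this
  omega

theorem sigmaEq_eq_card_repeatPositions (ℓ : Fin k → ℕ) : sigmaEq ℓ = #(repeatPositions ℓ) := by
  refine card_nbij Prod.snd (fun p hp => ?_) (fun p hp q hq he => ?_) fun j hj => ?_
  · obtain ⟨h1, h2⟩ := (mem_filter.1 hp).2
    exact mem_filter.2 ⟨mem_univ _, p.1, h1, h2⟩
  · have hp' := (mem_filter.1 (mem_coe.1 hp)).2.1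
    have hq' := (mem_filter.1 (mem_coe.1 hq)).2.1
    have he' : (p.2 : ℕ) = q.2 := congrArg Fin.val he
    exact Prod.ext (Fin.ext (by omega)) he
  · obtain ⟨i, h1, h2⟩ := (mem_filter.1 (mem_coe.1 hj)).2
    exact ⟨(i, j), mem_coe.2 (mem_filter.2 ⟨mem_univ _, h1, h2⟩), rfl⟩

theorem sigmaEq_eq_sub_card_toFinset {ℓ : Fin k → ℕ} (hℓ : Antitone ℓ) :
    sigmaEq ℓ = k - (List.ofFn ℓ : Multiset ℕ).toFinset.card := by
  have hle : #(repeatPositions ℓ) ≤ k := (card_le_univ _).trans_eq (Fintype.card_fin k)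
  rw [List.toFinset_coe, ← Fin.univ_image_def, card_image_univ_of_antitone hℓ, card_compl,
    Fintype.card_fin, Nat.sub_sub_self hle, sigmaEq_eq_card_repeatPositions]

end Tuples

section Zeta

theorem tsum_subtype_and_eq_tsum_subtype {β M : Type*} [AddCommMonoid M] [TopologicalSpace M]
    {P Q : β → Prop} {f : β → M} (hf : ∀ b, Q b → ¬ P b → f b = 0) :
    ∑' b : {b // P b ∧ Q b}, f b = ∑' b : {b // Q b}, f b :=
  calc ∑' b : {b // P b ∧ Q b}, f b
      = ∑' b, Set.indicator {b | P b ∧ Q b} f b := _root_.tsum_subtype _ f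
    _ = ∑' b, Set.indicator {b | Q b} f b := tsum_congr fun b => by
      by_cases hQ : b ∈ {b | Q b}
      · by_cases hP : P b
        · rw [Set.indicator_of_mem (show b ∈ {b | P b ∧ Q b} from ⟨hP, hQ⟩),
            Set.indicator_of_mem hQ]
        · rw [Set.indicator_of_notMem fun h => hP h.1, Set.indicator_of_mem hQ, hf b hQ hP]
      · rw [Set.indicator_of_notMem fun h => hQ h.2, Set.indicator_of_notMem hQ]
    _ = ∑' b : {b // Q b}, f b := (_root_.tsum_subtype _ f).symm

variable {m : ℕ} (hm : m ≠ 0)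
include hm

/-- Since `1 / 0 = 0` in `ℝ`, the positivity constraint in the ζ-sums only removes zero terms. -/
theorem prod_one_div_pow_eq_zero {k : ℕ} {ℓ : Fin k → ℕ} (hℓ : ¬ ∀ i, 1 ≤ ℓ i) :
    ∏ i, (1 : ℝ) / (ℓ i : ℝ) ^ m = 0 := by
  obtain ⟨i, hi⟩ := not_forall.1 hℓ
  exact prod_eq_zero (mem_univ i) (by simp [Nat.lt_one_iff.1 (not_le.1 hi), hm])

theorem zetaStarConst_eq_completeSum (j : ℕ) :
    zetaStarConst m j = completeSum (fun n : ℕ => 1 / (n : ℝ) ^ m) j := by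
  have hpos : zetaStarConst m j =
      ∑' ℓ : {ℓ : Fin j → ℕ // Antitone ℓ}, ∏ i, (1 : ℝ) / (ℓ.1 i : ℝ) ^ m :=
    tsum_subtype_and_eq_tsum_subtype fun ℓ _ hℓ => prod_one_div_pow_eq_zero hm hℓ
  rw [hpos, completeSum, ← (antitoneEquivSym ℕ j).tsum_eq]
  simp only [antitoneEquivSym_apply_coe, Multiset.map_coe, Multiset.prod_coe, List.map_ofFn,
    List.prod_ofFn, comp_apply]

theorem zetaConst_eq_elementarySum (j : ℕ) :
    zetaConst m j = elementarySum (fun n : ℕ => 1 / (n : ℝ) ^ m) j := by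
  have hpos : zetaConst m j =
      ∑' ℓ : {ℓ : Fin j → ℕ // StrictAnti ℓ}, ∏ i, (1 : ℝ) / (ℓ.1 i : ℝ) ^ m :=
    tsum_subtype_and_eq_tsum_subtype fun ℓ _ hℓ => prod_one_div_pow_eq_zero hm hℓ
  rw [hpos, elementarySum, ← (strictAntiEquivFinset ℕ j).tsum_eq]
  exact tsum_congr fun ℓ => by
    rw [strictAntiEquivFinset_apply_coe, prod_image ℓ.2.injective.injOn]

theorem zetaInterpConst_eq_interpolatedSum (t : ℝ) (k : ℕ) :
    zetaInterpConst t m k = interpolatedSum (fun n : ℕ => 1 / (n : ℝ) ^ m) t k := by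
  have hpos : zetaInterpConst t m k = ∑' ℓ : {ℓ : Fin k → ℕ // Antitone ℓ},
      t ^ sigmaEq ℓ.1 * ∏ i, (1 : ℝ) / (ℓ.1 i : ℝ) ^ m :=
    tsum_subtype_and_eq_tsum_subtype
      (f := fun ℓ : Fin k → ℕ => t ^ sigmaEq ℓ * ∏ i, (1 : ℝ) / (ℓ i : ℝ) ^ m)
      fun ℓ _ hℓ => by rw [prod_one_div_pow_eq_zero hm hℓ, mul_zero]
  rw [hpos, interpolatedSum, ← (antitoneEquivSym ℕ k).tsum_eq]
  refine tsum_congr fun ℓ => ?_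
  rw [antitoneEquivSym_apply_coe, ← sigmaEq_eq_sub_card_toFinset ℓ.2]
  simp only [Multiset.map_coe, Multiset.prod_coe, List.map_ofFn, List.prod_ofFn, comp_apply]

end Zeta

theorem interpolated_zeta_decomposition (m k : ℕ) (hm : 2 ≤ m) (t : ℝ) :
    zetaInterpConst t m k =
      ∑ j ∈ Finset.range (k + 1),
        t ^ j * zetaStarConst m j * (1 - t) ^ (k - j) * zetaConst m (k - j) := by
  have hm0 : m ≠ 0 := by omega
  rw [zetaInterpConst_eq_interpolatedSum hm0]
  simp only [zetaStarConst_eq_completeSum hm0, zetaConst_eq_elementarySum hm0]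
  exact interpolatedSum_eq_sum (fun n => by positivity) (Real.summable_one_div_nat_pow.2 hm) t k
end

section
/- For k > n ≥ 1 and 0 ≤ i ≤ n-1, the coefficient extraction [t^i] ∑_{j=0}^{n-1} C(k-1,j) t^j (1-t)^{n-1-j} equals C(k-n+i-1, k-n-1); that is, ∑_{j=0}^{i} C(k-1, j) C(n-1-j, i-j) (-1)^{i-j} = C(k-n+i-1, k-n-1). -/
/-!
Upper negation turns `(-1)^(i-j) * C(n-1-j, i-j)` into the generalized binomial coefficient
`C(i-n, i-j)` over `ℤ`, whose upper index no longer depends on `j`. The sum is then the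
Chu–Vandermonde convolution `C(k-1 + (i-n), i)` in the binomial ring `ℤ`,
an ordinary binomial coefficient because `k > n`.
-/

open Finset

theorem Int.neg_one_pow_mul_choose_eq_ringChoose (N m : ℕ) :
    (-1 : ℤ) ^ m * (N.choose m : ℤ) = Ring.choose ((m : ℤ) - N - 1) m := by
  have h := Ring.choose_neg ((N : ℤ) + 1 - m) m
  rw [show -((N : ℤ) + 1 - m) = m - N - 1 by ring, show (N : ℤ) + 1 - m + m - 1 = N by ring,
    Ring.choose_natCast, Int.negOnePow_def, Units.smul_def] at h
  simpa using h.symm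

theorem sum_range_neg_one_pow_mul_choose_mul_choose_sub (a b i : ℕ) (hi : i ≤ b) :
    ∑ j ∈ range (i + 1), (-1 : ℤ) ^ (i - j) * (a.choose j : ℤ) * ((b - j).choose (i - j) : ℤ) =
      Ring.choose ((a : ℤ) + i - b - 1) i := by
  have hterm : ∀ j ∈ range (i + 1), (-1 : ℤ) ^ (i - j) * (a.choose j : ℤ) *
      ((b - j).choose (i - j) : ℤ) =
        Ring.choose (a : ℤ) j * Ring.choose ((i : ℤ) - b - 1) (i - j) := by
    intro j hj
    have hji : j ≤ i := Nat.lt_succ_iff.mp (mem_range.mp hj)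
    rw [mul_right_comm, Int.neg_one_pow_mul_choose_eq_ringChoose, Ring.choose_natCast,
      mul_comm]
    congr 2
    push_cast [hji, hji.trans hi]
    ring
  rw [sum_congr rfl hterm, ← Nat.sum_antidiagonal_eq_sum_range_succ
      (fun j l => Ring.choose (a : ℤ) j * Ring.choose ((i : ℤ) - b - 1) l),
    ← Ring.add_choose_eq i (Commute.all _ _)]
  congr 1
  ring

theorem coefficient_extraction_binomial (n k i : ℕ) (hn : 1 ≤ n) (hk : n < k)
    (hi : i ≤ n - 1) :
    (∑ j ∈ Finset.range (i + 1),
        (-1 : ℤ) ^ (i - j) * ((k - 1).choose j : ℤ) * ((n - 1 - j).choose (i - j) : ℤ)) =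
      ((k - n + i - 1).choose (k - n - 1) : ℤ) := by
  have hupper : ((k - 1 : ℕ) : ℤ) + i - (n - 1 : ℕ) - 1 = (k - n + i - 1 : ℕ) := by
    push_cast [hn, hk.le, (by omega : 1 ≤ k), (by omega : 1 ≤ k - n + i)]
    ring
  rw [sum_range_neg_one_pow_mul_choose_mul_choose_sub _ _ _ hi, hupper, Ring.choose_natCast,
    Nat.choose_symm_of_eq_add (by omega : k - n + i - 1 = i + (k - n - 1))]
end
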